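/- arXiv:math/0509626 — 5 statements merged into one kernel-verified Lean document; each statement's English description precedes it below -/
import Mathlib

section
/- (Denjoy–Koksma inequality) Let α be irrational with convergent denominator q_n, and let f : ℝ/ℤ → ℝ be of bounded variation. Then for every x, |(1/q_n) Σ_{j=0}^{q_n−1} f(x + jα) − ∫_0^1 f dμ| ≤ (1/q_n) Var(f). -/
/-!
Let `p/q` be the `n`-th convergent of `α`. Then `p` and `q` are coprime and `|α - p/q| ≤ 1/q²`,
so modulo `1` the point `x + jα` (`j < q`) equals `x + (jp mod q)/q + j(α - p/q)` with
`|j(α - p/q)| ≤ 1/q`. After one common shift, each of the `q` arcs of length `1/q` therefore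
contains exactly one of these points. On each arc, `f` at the point differs from its mean by at
most the variation of `f` over the arc, and these variations add up to `Var f`.
-/

open MeasureTheory Set Finset

section Variation

variable {E : Type*} [PseudoEMetricSpace E]

theorem eVariationOn_Icc_add_Icc (f : ℝ → E) {a b c : ℝ} (hab : a ≤ b) (hbc : b ≤ c) :
    eVariationOn f (Icc a b) + eVariationOn f (Icc b c) = eVariationOn f (Icc a c) := by
  simpa using eVariationOn.Icc_add_Icc f (s := univ) hab hbc (mem_univ b)

theorem eVariationOn_comp_add_right (f : ℝ → E) (c a b : ℝ) :
    eVariationOn (fun s ↦ f (s + c)) (Icc a b) = eVariationOn f (Icc (a + c) (b + c)) := by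
  rw [← image_add_const_Icc]
  exact eVariationOn.comp_eq_of_monotoneOn f (· + c) fun _ _ _ _ h ↦ by simpa using h

theorem eVariationOn_sum_Icc (f : ℝ → E) {c : ℕ → ℝ} (hc : Monotone c) (n : ℕ) :
    ∑ k ∈ range n, eVariationOn f (Icc (c k) (c (k + 1))) = eVariationOn f (Icc (c 0) (c n)) := by
  induction n with
  | zero => simp
  | succ n ih =>
    rw [sum_range_succ, ih, eVariationOn_Icc_add_Icc f (hc n.zero_le) (hc n.le_succ)]

theorem Function.Periodic.eVariationOn_Icc_add {f : ℝ → E} {T : ℝ} (hf : Function.Periodic f T)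
    (hT : 0 < T) (a : ℝ) : eVariationOn f (Icc a (a + T)) = eVariationOn f (Icc 0 T) := by
  have hfT : (fun s ↦ f (s + T)) = f := funext hf
  set φ : ℝ → ENNReal := fun a ↦ eVariationOn f (Icc a (a + T))
  have hφ : Function.Periodic φ T := fun a ↦ by
    simp only [φ, ← eVariationOn_comp_add_right, hfT]
  have hφ_Ico : ∀ b ∈ Ico 0 T, φ b = φ 0 := fun b ⟨hb₀, hbT⟩ ↦ by
    have hshift : eVariationOn f (Icc T (b + T)) = eVariationOn f (Icc 0 b) := by
      simpa [hfT] using (eVariationOn_comp_add_right f T 0 b).symm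
    simp only [φ, zero_add]
    rw [← eVariationOn_Icc_add_Icc f (by linarith) (by linarith : T ≤ b + T), hshift, add_comm,
      eVariationOn_Icc_add_Icc f hb₀ hbT.le]
  calc φ a = φ (a - ⌊a / T⌋ * T) := (hφ.sub_int_mul_eq _).symm
    _ = φ 0 := hφ_Ico _ ⟨Int.sub_floor_div_mul_nonneg a hT, Int.sub_floor_div_mul_lt a hT⟩
    _ = _ := by simp [φ]

end Variation

theorem BoundedVariationOn.intervalIntegrable {g : ℝ → ℝ} {a b : ℝ}
    (hg : BoundedVariationOn g (uIcc a b)) : IntervalIntegrable g volume a b := by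
  obtain ⟨P, Q, hP, hQ, rfl⟩ := hg.locallyBoundedVariationOn.exists_monotoneOn_sub_monotoneOn
  exact hP.intervalIntegrable.sub hQ.intervalIntegrable

theorem abs_mul_sub_integral_le_eVariationOn {g : ℝ → ℝ} {u v t : ℝ} (huv : u ≤ v)
    (ht : t ∈ Icc u v) (hg : BoundedVariationOn g (Icc u v)) :
    |(v - u) * g t - ∫ s in u..v, g s| ≤ (v - u) * (eVariationOn g (Icc u v)).toReal := by
  have hint : IntervalIntegrable g volume u v :=
    BoundedVariationOn.intervalIntegrable (by rwa [uIcc_of_le huv])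
  have hdiff : (v - u) * g t - ∫ s in u..v, g s = ∫ s in u..v, (g t - g s) := by
    rw [intervalIntegral.integral_sub intervalIntegrable_const hint,
      intervalIntegral.integral_const, smul_eq_mul, mul_comm]
  have hosc : ∀ s ∈ uIoc u v, ‖g t - g s‖ ≤ (eVariationOn g (Icc u v)).toReal := fun s hs ↦ by
    rw [uIoc_of_le huv] at hs
    simpa [Real.dist_eq] using hg.dist_le ht (Ioc_subset_Icc_self hs)
  rw [hdiff, mul_comm, ← abs_of_nonneg (sub_nonneg.2 huv)]
  exact intervalIntegral.norm_integral_le_of_norm_le_const hosc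

theorem abs_riemannSum_sub_integral_le {g : ℝ → ℝ} {a h : ℝ} (hh : 0 ≤ h) {q : ℕ}
    {σ : ℕ → ℕ} (hσ : BijOn σ (Finset.range q : Set ℕ) (Finset.range q)) {t : ℕ → ℝ}
    (ht : ∀ j < q, t j ∈ Icc (a + σ j * h) (a + (σ j + 1) * h))
    (hg : BoundedVariationOn g (Icc a (a + q * h))) :
    |h * ∑ j ∈ range q, g (t j) - ∫ s in a..a + q * h, g s| ≤
      h * (eVariationOn g (Icc a (a + q * h))).toReal := by
  set c : ℕ → ℝ := fun k ↦ a + k * h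
  have hc : Monotone c := fun k l hkl ↦ by simp only [c]; gcongr
  have hc_succ : ∀ k, c (k + 1) = c k + h := fun k ↦ by simp only [c]; push_cast; ring
  have hsub : ∀ k < q, Icc (c k) (c (k + 1)) ⊆ Icc a (a + q * h) := fun k hk ↦
    Icc_subset_Icc (by simpa [c] using hc k.zero_le) (by simpa [c] using hc hk)
  have hgk : ∀ k < q, BoundedVariationOn g (Icc (c k) (c (k + 1))) := fun k hk ↦
    hg.mono (hsub k hk)
  have hsplit : ∫ s in a..a + q * h, g s = ∑ k ∈ range q, ∫ s in c k..c (k + 1), g s := by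
    rw [intervalIntegral.sum_integral_adjacent_intervals fun k hk ↦
      BoundedVariationOn.intervalIntegrable (by rw [uIcc_of_le (hc k.le_succ)]; exact hgk k hk)]
    simp [c]
  have hvar : ∑ k ∈ range q, (eVariationOn g (Icc (c k) (c (k + 1)))).toReal =
      (eVariationOn g (Icc a (a + q * h))).toReal := by
    rw [← ENNReal.toReal_sum fun k hk ↦ hgk k (mem_range.1 hk), eVariationOn_sum_Icc g hc]
    simp [c]
  have reindex : ∀ F : ℕ → ℝ, ∑ j ∈ range q, F (σ j) = ∑ k ∈ range q, F k := fun F ↦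
    sum_nbij σ (fun j hj ↦ hσ.mapsTo hj) hσ.injOn hσ.surjOn fun _ _ ↦ rfl
  rw [hsplit, ← reindex fun k ↦ ∫ s in c k..c (k + 1), g s, mul_sum, ← sum_sub_distrib, ← hvar,
    ← reindex fun k ↦ (eVariationOn g (Icc (c k) (c (k + 1)))).toReal, mul_sum]
  refine (abs_sum_le_sum_abs _ _).trans (sum_le_sum fun j hj ↦ ?_)
  have hσj : σ j < q := Finset.mem_range.1 (hσ.mapsTo hj)
  replace hj : j < q := Finset.mem_range.1 hj
  simpa [hc_succ] using abs_mul_sub_integral_le_eVariationOn (hc (σ j).le_succ)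
    (by simpa [c] using ht j hj) (hgk _ hσj)

namespace GenContFract

open GenContFract (of)

variable {K : Type*} [Field K] [LinearOrder K] [FloorRing K]

theorem exists_int_eq_of_contsAux (v : K) (m : ℕ) :
    ∃ a b : ℤ, (of v).contsAux m = ⟨(a : K), (b : K)⟩ := by
  induction m using Nat.strong_induction_on with
  | _ m ih =>
  rcases m with _ | _ | m
  · exact ⟨1, 0, by simp [contsAux]⟩
  · exact ⟨⌊v⌋, 1, by simp [contsAux, of_h_eq_floor]⟩
  · obtain ⟨a₁, b₁, h₁⟩ := ih (m + 1) (by omega)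
    rcases hs : (of v).s.get? m with _ | gp
    · exact ⟨a₁, b₁, (contsAux_stable_of_terminated (m + 1).le_succ hs).trans h₁⟩
    · obtain ⟨a₀, b₀, h₀⟩ := ih m (by omega)
      obtain ⟨hgp_a, z, hgp_b⟩ := of_partNum_eq_one_and_exists_int_partDen_eq hs
      refine ⟨z * a₁ + a₀, z * b₁ + b₀, ?_⟩
      rw [contsAux_recurrence hs h₀ h₁, hgp_a, hgp_b]
      simp

theorem exists_int_eq_of_num (v : K) (n : ℕ) : ∃ p : ℤ, (of v).nums n = p := by
  obtain ⟨a, _, hconts⟩ := exists_int_eq_of_contsAux v (n + 1)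
  exact ⟨a, by rw [num_eq_conts_a, nth_cont_eq_succ_nth_contAux, hconts]⟩

theorem exists_int_eq_of_den (v : K) (n : ℕ) : ∃ q : ℤ, (of v).dens n = q := by
  obtain ⟨_, b, hconts⟩ := exists_int_eq_of_contsAux v (n + 1)
  exact ⟨b, by rw [den_eq_conts_b, nth_cont_eq_succ_nth_contAux, hconts]⟩

theorem isCoprime_of_num_of_den [IsStrictOrderedRing K] {v : K} {n : ℕ}
    (hn : ¬(of v).TerminatedAt n) {p q : ℤ} (hp : (of v).nums n = p) (hq : (of v).dens n = q) :
    IsCoprime p q := by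
  obtain ⟨p₁, hp₁⟩ := exists_int_eq_of_num v (n + 1)
  obtain ⟨q₁, hq₁⟩ := exists_int_eq_of_den v (n + 1)
  have hdet : p * q₁ - q * p₁ = (-1) ^ (n + 1) := by
    have h := SimpContFract.determinant (s := SimpContFract.of v) hn
    simp only [SimpContFract.of, hp, hq, hp₁, hq₁] at h
    exact_mod_cast h
  have hunit : ((-1 : ℤ) ^ (n + 1)) * (-1) ^ (n + 1) = 1 := by rw [← mul_pow]; norm_num
  exact ⟨(-1) ^ (n + 1) * q₁, -((-1) ^ (n + 1) * p₁),
    by linear_combination (-1) ^ (n + 1) * hdet + hunit⟩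

theorem one_le_of_den [IsStrictOrderedRing K] {v : K} {n : ℕ}
    (hn : ¬(of v).TerminatedAt (n - 1)) : 1 ≤ (of v).dens n :=
  le_trans (by exact_mod_cast Nat.fib_pos.2 n.succ_pos) (succ_nth_fib_le_of_nth_den (Or.inr hn))

theorem abs_sub_num_div_den_le [IsStrictOrderedRing K] {v : K} {n : ℕ}
    (hn : ¬(of v).TerminatedAt n) :
    |v - (of v).nums n / (of v).dens n| ≤ 1 / (of v).dens n ^ 2 := by
  have hpos : 0 < (of v).dens n :=
    one_pos.trans_le (one_le_of_den (mt (terminated_stable (n.sub_le 1)) hn))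
  rw [← conv_eq_num_div_den, sq]
  exact (abs_sub_convs_le hn).trans (by gcongr; exact of_den_mono)

end GenContFract

theorem Irrational.not_terminatedAt_of {α : ℝ} (hα : Irrational α) (n : ℕ) :
    ¬(GenContFract.of α).TerminatedAt n := fun hn ↦ by
  obtain ⟨r, hr⟩ := (GenContFract.terminates_iff_rat α).1 ⟨n, hn⟩
  exact hα ⟨r, hr.symm⟩

theorem bijOn_toNat_mul_emod {p : ℤ} {q : ℕ} (hpq : IsCoprime p q) :
    BijOn (fun j : ℕ ↦ (j * p % q).toNat) (Finset.range q : Set ℕ) (Finset.range q) := by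
  have hmaps : MapsTo (fun j : ℕ ↦ (j * p % q).toNat) (Finset.range q : Set ℕ) (Finset.range q) :=
    fun j hj ↦ by
      have hq : (0 : ℤ) < q := by simp at hj; omega
      have := Int.emod_lt_of_pos (j * p) hq
      simp only [Finset.coe_range, Set.mem_Iio]
      omega
  refine ((Finset.range q).finite_toSet.injOn_iff_bijOn_of_mapsTo hmaps).1 fun i hi j hj hij ↦ ?_
  simp only [Finset.coe_range, Set.mem_Iio] at hi hj hij
  have hq : (0 : ℤ) < q := by omega
  have hmod : i * p % q = j * p % q := by
    have := Int.emod_nonneg (i * p) hq.ne'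
    have := Int.emod_nonneg (j * p) hq.ne'
    omega
  have hdvd : (q : ℤ) ∣ (j - i) * p := by
    rw [sub_mul]
    exact Int.ModEq.dvd hmod
  have := Int.eq_zero_of_abs_lt_dvd (hpq.symm.dvd_of_dvd_mul_right hdvd) (by rw [abs_lt]; omega)
  omega

theorem exists_forall_mul_mem_Icc {δ ε : ℝ} {q : ℕ} (h : ∀ j < q, j * |δ| ≤ ε) :
    ∃ c, ∀ j < q, (j : ℝ) * δ ∈ Icc c (c + ε) := by
  rcases le_or_gt 0 δ with hδ | hδ
  · refine ⟨0, fun j hj ↦ ⟨by positivity, ?_⟩⟩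
    simpa [abs_of_nonneg hδ] using h j hj
  · refine ⟨-ε, fun j hj ↦ ⟨?_, ?_⟩⟩
    · have := h j hj
      rw [abs_of_neg hδ] at this
      linarith
    · simpa using mul_nonpos_of_nonneg_of_nonpos j.cast_nonneg hδ.le

theorem exists_bijOn_add_mul_mem_Icc {α : ℝ} {p : ℤ} {q : ℕ} (hq : 0 < q) (hpq : IsCoprime p q)
    (hα : |α - p / q| ≤ 1 / q ^ 2) (x : ℝ) :
    ∃ (a : ℝ) (σ : ℕ → ℕ) (m : ℕ → ℤ), BijOn σ (Finset.range q : Set ℕ) (Finset.range q) ∧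
      ∀ j < q, x + j * α + m j ∈ Icc (a + σ j * (1 / q)) (a + (σ j + 1) * (1 / q)) := by
  have hqR : (0 : ℝ) < q := by exact_mod_cast hq
  obtain ⟨c, hc⟩ := exists_forall_mul_mem_Icc (δ := α - p / q) (ε := 1 / q) fun j hj ↦
    calc (j : ℝ) * |α - p / q| ≤ q * (1 / q ^ 2) := by gcongr
      _ = 1 / q := by field_simp
  refine ⟨x + c, fun j ↦ (j * p % q).toNat, fun j ↦ -(j * p / q), bijOn_toNat_mul_emod hpq,
    fun j hj ↦ ?_⟩
  have hrem : (((j * p % q).toNat : ℕ) : ℝ) = ((j * p % q : ℤ) : ℝ) := by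
    rw [← Int.cast_natCast, Int.toNat_of_nonneg (Int.emod_nonneg _ (by omega))]
  have hdiv : q * ((j * p / q : ℤ) : ℝ) + ((j * p % q : ℤ) : ℝ) = j * p := by
    exact_mod_cast Int.mul_ediv_add_emod (j * p) q
  have hpoint : x + j * α + ((-(j * p / q) : ℤ) : ℝ) =
      x + (j * p % q).toNat * (1 / q) + j * (α - p / q) := by
    have hjp : (j : ℝ) * (p / q) = ((j * p / q : ℤ) : ℝ) + ((j * p % q : ℤ) : ℝ) * (1 / q) := by
      field_simp
      linear_combination -hdiv
    rw [hrem, Int.cast_neg]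
    linear_combination hjp
  obtain ⟨hc₀, hc₁⟩ := hc j hj
  rw [hpoint]
  constructor <;> nlinarith

/-- Denjoy–Koksma inequality: if `α` is irrational with continued fraction convergent
denominator `q = q_n`, and `f : ℝ/ℤ → ℝ` (realized as a `1`-periodic function on `ℝ`)
has bounded variation, then for every `x`,
`|(1/q) ∑_{j<q} f (x + jα) − ∫₀¹ f| ≤ (1/q) Var f`. -/
theorem stmt2 (α : ℝ) (hirr : Irrational α) (n : ℕ) (q : ℕ)
    (hq : (q : ℝ) = (GenContFract.of α).dens n)
    (f : ℝ → ℝ) (hper : Function.Periodic f 1)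
    (hBV : BoundedVariationOn f (Set.Icc 0 1)) (x : ℝ) :
    |(1 / q : ℝ) * ∑ j ∈ Finset.range q, f (x + j * α) - ∫ t in (0 : ℝ)..1, f t| ≤
      (1 / q : ℝ) * (eVariationOn f (Set.Icc 0 1)).toReal := by
  have hterm := hirr.not_terminatedAt_of
  have hq_pos : 0 < q := by
    have : (1 : ℝ) ≤ q := hq ▸ GenContFract.one_le_of_den (hterm _)
    exact_mod_cast this
  obtain ⟨p, hp⟩ := GenContFract.exists_int_eq_of_num α n
  have hpq : IsCoprime p q :=
    GenContFract.isCoprime_of_num_of_den (hterm n) hp (by rw [← hq, Int.cast_natCast])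
  have hα : |α - p / q| ≤ 1 / q ^ 2 := by
    simpa [hp, ← hq] using GenContFract.abs_sub_num_div_den_le (hterm n)
  obtain ⟨a, σ, m, hσ, hmem⟩ := exists_bijOn_add_mul_mem_Icc hq_pos hpq hα x
  have hlen : a + q * (1 / q) = a + 1 := by field_simp
  have hvar : eVariationOn f (Icc a (a + 1)) = eVariationOn f (Icc 0 1) :=
    hper.eVariationOn_Icc_add one_pos a
  have hsum : ∑ j ∈ Finset.range q, f (x + j * α) = ∑ j ∈ Finset.range q, f (x + j * α + m j) :=
    Finset.sum_congr rfl fun j _ ↦ by simpa using (hper.int_mul (m j) (x + j * α)).symm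
  have key := abs_riemannSum_sub_integral_le (by positivity) hσ hmem
    (by rwa [hlen, BoundedVariationOn, hvar])
  rwa [hlen, hvar, hper.intervalIntegral_add_eq a 0, zero_add, ← hsum] at key
end

section
/- For the function φ̄_n(x) = (1 − 1_{[1 − 1/(50 q_n), 1)}(x)) · (−1 − log(1−x)) on [0,1), the total variation of φ̄_n equals 2 log(50 q_n) − 1. -/
/-!
On `[0, c]` with `c = 1 - 1/(50q)`, `φ̄` agrees with the increasing function
`g x = -1 - log (1 - x)` except at `c`, where it drops from the left limit `g c = log (50q) - 1`
to `0`; on `[c, 1)` it stays `0`. So the variation is the increase `g c - g 0 = log (50q)`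
plus the jump `log (50q) - 1`.
-/

open Set Filter Topology

section Variation

variable {α : Type*} [LinearOrder α]

theorem eVariationOn_Ico_eq_Icc_of_eqOn_const {E : Type*} [PseudoEMetricSpace E] {f : α → E}
    {a b c : α} (hab : a ≤ b) (hbc : b < c) (hf : ∀ x ∈ Ico b c, f x = f b) :
    eVariationOn f (Ico a c) = eVariationOn f (Icc a b) := by
  have hconst : eVariationOn f (Ico b c) = 0 :=
    eVariationOn.constant_on <| (subsingleton_singleton (a := f b)).anti <| by
      rintro _ ⟨x, hx, rfl⟩
      exact hf x hx
  rw [← Icc_union_Ico_eq_Ico hab hbc,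
    eVariationOn.union f ⟨right_mem_Icc.2 hab, fun _ hx ↦ hx.2⟩
      ⟨left_mem_Ico.2 hbc, fun _ hx ↦ hx.1⟩, hconst, add_zero]

variable [TopologicalSpace α] [OrderTopology α] [DenselyOrdered α]

theorem eVariationOn_Icc_eq_of_eqOn_Ico_of_monotoneOn {f g : α → ℝ} {a b : α} (hab : a < b)
    (hg : MonotoneOn g (Icc a b)) (hgb : ContinuousWithinAt g (Iic b) b)
    (hfg : EqOn f g (Ico a b)) :
    eVariationOn f (Icc a b) = ENNReal.ofReal (g b - g a) + edist (f b) (g b) := by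
  have hIio : Icc a b ∩ Iio b = Ico a b := by
    ext x
    simp only [mem_inter_iff, mem_Icc, mem_Iio, mem_Ico]
    exact ⟨fun h ↦ ⟨h.1.1, h.2⟩, fun h ↦ ⟨⟨h.1, h.2.le⟩, h.2⟩⟩
  have : (𝓝[Icc a b ∩ Iio b] b).NeBot := hIio ▸ right_nhdsWithin_Ico_neBot hab
  have hlim : Tendsto f (𝓝[Icc a b ∩ Iio b] b) (𝓝 (g b)) := by
    refine (hgb.mono fun x hx ↦ hx.2.le).tendsto.congr' ?_
    filter_upwards [self_mem_nhdsWithin] with x hx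
    exact (hfg (hIio ▸ hx)).symm
  rw [← inter_eq_left.2 (Icc_subset_Iic_self : Icc a b ⊆ Iic b),
    eVariationOn.eVariationOn_on_inter_Iic_eq_Iio_add_edist this (right_mem_Icc.2 hab.le) hlim,
    hIio,
    eVariationOn.eq_of_eqOn hfg, eVariationOn.eVariationOn_Ico_eq_Icc_of_continuousWithinAt hgb,
    ← inter_self (Icc a b), hg.eVariationOn_eq (left_mem_Icc.2 hab.le) (right_mem_Icc.2 hab.le)]

end Variation

/-- For the truncated function `φ̄_n` equal to `-1 - log(1-x)` on `[0, 1 - 1/(50 qₙ))`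
and `0` on `[1 - 1/(50 qₙ), 1)`, the total variation of `φ̄_n` on `[0,1)` equals
`2 log(50 qₙ) - 1`. -/
theorem stmt4 (q : ℕ) (hq : 1 ≤ q) :
    (eVariationOn
        (fun x : ℝ => if x < 1 - 1 / (50 * q) then -1 - Real.log (1 - x) else 0)
        (Set.Ico (0 : ℝ) 1)).toReal = 2 * Real.log (50 * q) - 1 := by
  set Q : ℝ := 50 * q
  have hQ : 50 ≤ Q := by
    have : (1 : ℝ) ≤ q := by exact_mod_cast hq
    linarith
  have hlogQ : 1 ≤ Real.log Q := by
    rw [Real.le_log_iff_exp_le (by linarith)]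
    linarith [Real.exp_one_lt_d9]
  set c := 1 - 1 / Q
  have h1c : 1 - c = Q⁻¹ := by ring
  have hc0 : 0 < c := by
    have : 1 / Q < 1 := (div_lt_one (by linarith)).2 (by linarith)
    linarith
  have hc1 : c < 1 := by
    have : 0 < 1 / Q := by positivity
    linarith
  set g : ℝ → ℝ := fun x ↦ -1 - Real.log (1 - x)
  have hg : MonotoneOn g (Icc 0 c) := fun x _ y hy hxy ↦ by
    have : 0 < 1 - y := by linarith [hy.2]
    simp only [g, sub_le_sub_iff_left]
    exact Real.log_le_log this (by linarith)
  have hgc : ContinuousWithinAt g (Iic c) c := by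
    have : 1 - c ≠ 0 := by linarith
    fun_prop (disch := exact this)
  have hg0 : g 0 = -1 := by simp [g]
  have hgc_eq : g c = Real.log Q - 1 := by
    simp only [g, h1c, Real.log_inv]
    ring
  rw [eVariationOn_Ico_eq_Icc_of_eqOn_const hc0.le hc1 fun x hx ↦ by simp [not_lt.2 hx.1],
    eVariationOn_Icc_eq_of_eqOn_Ico_of_monotoneOn hc0 hg hgc fun x hx ↦ if_pos hx.2, hgc_eq]
  rw [edist_dist, Real.dist_eq, hg0, if_neg (lt_irrefl c), zero_sub, abs_neg,
    abs_of_nonneg (by linarith), ENNReal.toReal_add ENNReal.ofReal_ne_top ENNReal.ofReal_ne_top,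
    ENNReal.toReal_ofReal (by linarith), ENNReal.toReal_ofReal (by linarith)]
  ring
end

section
/- (Conditional Borel–Cantelli) Let (Ω, F, P) be a probability space and {C_n} ⊆ F a sequence of events such that for every k ≥ 0, Σ_{n=k}^∞ P(C_n | ∩_{j=k}^{n−1} C_j^c) = +∞. Then P(limsup_n C_n) = 1. -/
open MeasureTheory ProbabilityTheory Filter

/-- Conditional Borel–Cantelli lemma: if `(Ω, F, P)` is a probability space and
`{Cₙ}` are events such that for every `k`,
`∑_{n ≥ k} P(C_n | ⋂_{j=k}^{n-1} C_jᶜ) = ∞`, then `P(limsup Cₙ) = 1`. -/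
theorem stmt7 {Ω : Type*} [MeasurableSpace Ω] (P : Measure Ω) [IsProbabilityMeasure P]
    (C : ℕ → Set Ω) (hC : ∀ n, MeasurableSet (C n))
    (hdiv : ∀ k : ℕ,
      ∑' n : ℕ, P[C (k + n) | ⋂ j ∈ Finset.Ico k (k + n), (C j)ᶜ] = ⊤) :
    P (limsup C atTop) = 1 := by
  have key : ∀ k : ℕ, P (⋂ i, ⋂ _ : k ≤ i, (C i)ᶜ) = 0 := by
    intro k
    set B : ℕ → Set Ω := fun m => ⋂ j ∈ Finset.Ico k (k + m), (C j)ᶜ with hB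
    have hBmeas : ∀ m, MeasurableSet (B m) := fun m =>
      Finset.measurableSet_biInter _ fun j _ => (hC j).compl
    have hBeq : (⋂ i, ⋂ _ : k ≤ i, (C i)ᶜ) = ⋂ m, B m := by
      ext x
      simp only [Set.mem_iInter, hB, Finset.mem_Ico]
      constructor
      · intro h m j hj; exact h j hj.1
      · intro h j hj; exact h (j - k + 1) j ⟨hj, by omega⟩
    rw [hBeq]
    by_contra hne
    have hε : 0 < P (⋂ m, B m) := pos_iff_ne_zero.mpr hne
    set ε := P (⋂ m, B m) with hεdef
    set E : ℕ → Set Ω := fun m => B m ∩ C (k + m) with hE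
    have hEmeas : ∀ m, MeasurableSet (E m) := fun m => (hBmeas m).inter (hC (k + m))
    have hdisj : Pairwise (Function.onFun Disjoint E) := by
      have haux : ∀ a b : ℕ, a < b → Disjoint (E a) (E b) := by
        intro a b hab
        refine Set.disjoint_left.mpr fun x hxa hxb => ?_
        have hxBb : x ∈ B b := hxb.1
        have : x ∈ (C (k + a))ᶜ := by
          have := Set.mem_iInter.mp hxBb (k + a)
          simpa [Finset.mem_Ico, hab] using Set.mem_iInter.mp this
            (Finset.mem_Ico.mpr ⟨Nat.le_add_right _ _, by omega⟩)
        exact this hxa.2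
      intro a b hab
      rcases lt_or_gt_of_ne hab with h | h
      · exact haux a b h
      · exact (haux b a h).symm
    have hsum : ∑' m, P (E m) ≤ 1 := by
      rw [← measure_iUnion hdisj hEmeas]
      exact prob_le_one
    have hεB : ∀ m, ε ≤ P (B m) := fun m => measure_mono (Set.iInter_subset B m)
    have hle : ∀ m, P[C (k + m) | ⋂ j ∈ Finset.Ico k (k + m), (C j)ᶜ] ≤ ε⁻¹ * P (E m) := by
      intro m
      rw [cond_apply (hBmeas m)]
      exact mul_le_mul_left (ENNReal.inv_le_inv.mpr (hεB m)) _
    have hfin : ∑' m, P[C (k + m) | ⋂ j ∈ Finset.Ico k (k + m), (C j)ᶜ] ≤ ε⁻¹ * 1 := by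
      calc ∑' m, P[C (k + m) | ⋂ j ∈ Finset.Ico k (k + m), (C j)ᶜ]
          ≤ ∑' m, ε⁻¹ * P (E m) := ENNReal.tsum_le_tsum hle
        _ = ε⁻¹ * ∑' m, P (E m) := ENNReal.tsum_mul_left
        _ ≤ ε⁻¹ * 1 := mul_le_mul_right hsum _
    rw [hdiv k] at hfin
    have : ε⁻¹ * 1 < ⊤ := by
      rw [mul_one]
      exact ENNReal.inv_lt_top.mpr hε
    exact absurd (lt_of_le_of_lt hfin this) (lt_irrefl _)
  have hLeq : limsup C atTop = ⋂ k, ⋃ i, ⋃ _ : k ≤ i, C i := limsup_eq_iInf_iSup_of_nat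
  have hmeas : MeasurableSet (limsup C atTop) := by
    rw [hLeq]
    exact MeasurableSet.iInter fun k =>
      MeasurableSet.iUnion fun i => MeasurableSet.iUnion fun _ => hC i
  rw [← prob_compl_eq_zero_iff hmeas]
  have hcompl : (limsup C atTop)ᶜ = ⋃ k, ⋂ i, ⋂ _ : k ≤ i, (C i)ᶜ := by
    rw [hLeq]
    simp [Set.compl_iInter, Set.compl_iUnion]
  rw [hcompl]
  exact measure_iUnion_null key
end

section
/- For an irrational α with partial quotients a_n and convergent denominators q_n, the series Σ_{n≥1} 1/log(q_n) diverges if and only if the series Σ_{n≥1} 1/(Σ_{i=1}^n log a_i) diverges (with the convention that terms with zero denominator, i.e. when all a_i = 1 up to n, are treated as +∞ or omitted for finitely many n). -/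
open Filter

lemma key_lemma (L : ℕ → ℝ) (hmono : Monotone L) (c : ℝ) (hc : 0 < c)
    (hpos : ∀ n, 0 < L n)
    (h : ∑' n : ℕ, 1 / ENNReal.ofReal (L n) = ⊤) :
    ∑' n : ℕ, 1 / ENNReal.ofReal (L n + (n + 1) * c) = ⊤ := by
  by_contra hfin
  set G : ℕ → ℝ := fun n => (L n + (n + 1) * c)⁻¹ with hGdef
  have hden : ∀ n : ℕ, 0 < L n + (n + 1) * c := fun n => by
    have := hpos n; positivity
  have hGpos : ∀ n, 0 < G n := fun n => inv_pos.2 (hden n)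
  have hterm : ∀ n : ℕ, 1 / ENNReal.ofReal (L n + (n + 1) * c)
      = ENNReal.ofReal (G n) := fun n => by
    rw [one_div, hGdef, ENNReal.ofReal_inv_of_pos (hden n)]
  have hG : Summable G := by
    have h1 : ∑' n : ℕ, ENNReal.ofReal (G n) ≠ ⊤ := by
      rw [← tsum_congr hterm]; exact hfin
    have := ENNReal.summable_toReal h1
    exact this.congr fun n => by rw [ENNReal.toReal_ofReal (hGpos n).le]
  have htail : Tendsto (fun i => ∑' k : ℕ, G (k + i)) atTop (nhds 0) :=
    tendsto_sum_nat_add G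
  obtain ⟨N, hN, hN1⟩ := ((htail.eventually (eventually_lt_nhds
      (show (0:ℝ) < 1/(8*c) by positivity))).and (eventually_ge_atTop 1)).exists
  -- claim : for n ≥ 4N, (n+1)*c ≤ L n
  have hclaim : ∀ n, 4 * N ≤ n → ((n : ℝ) + 1) * c ≤ L n := by
    intro n hn
    by_contra hLn
    push_neg at hLn
    have hsum_le : ∑ k ∈ Finset.Ico N (n+1), G k ≤ ∑' k : ℕ, G (k + N) := by
      rw [Finset.sum_Ico_eq_sum_range]
      have : ∀ k, G (N + k) = G (k + N) := fun k => by rw [add_comm]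
      rw [tsum_congr (fun k => (this k).symm)] at *
      exact Summable.sum_le_tsum _ (fun _ _ => (hGpos _).le)
        (((summable_nat_add_iff N).2 hG).congr fun k => by rw [add_comm])
    have hlow : ∀ k ∈ Finset.Ico N (n+1), (2 * ((n:ℝ)+1) * c)⁻¹ ≤ G k := by
      intro k hk
      rw [Finset.mem_Ico] at hk
      have hkn : k ≤ n := Nat.lt_succ_iff.1 hk.2
      have hk1 : (k : ℝ) + 1 ≤ (n : ℝ) + 1 := by
        have : (k:ℝ) ≤ (n:ℝ) := Nat.cast_le.2 hkn
        linarith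
      have hLk : L k ≤ L n := hmono hkn
      apply inv_anti₀ (hden k)
      nlinarith
    have hcard : (Finset.Ico N (n+1)).card = n + 1 - N := Nat.card_Ico _ _
    have hsum_ge : ((n + 1 - N : ℕ) : ℝ) * (2 * ((n:ℝ)+1) * c)⁻¹
        ≤ ∑ k ∈ Finset.Ico N (n+1), G k := by
      calc ((n + 1 - N : ℕ) : ℝ) * (2 * ((n:ℝ)+1) * c)⁻¹
          = ∑ _k ∈ Finset.Ico N (n+1), (2 * ((n:ℝ)+1) * c)⁻¹ := by
            rw [Finset.sum_const, hcard, nsmul_eq_mul]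
        _ ≤ _ := Finset.sum_le_sum hlow
    have hNn : N ≤ n + 1 := by omega
    have hcast : ((n + 1 - N : ℕ) : ℝ) = (n : ℝ) + 1 - N := by
      push_cast [Nat.cast_sub hNn]; ring
    have hfinal : ((n:ℝ) + 1 - N) * (2 * ((n:ℝ)+1) * c)⁻¹ < 1/(8*c) := by
      rw [← hcast]; exact lt_of_le_of_lt (hsum_ge.trans hsum_le) hN
    rw [← div_eq_mul_inv, div_lt_div_iff₀ (by positivity) (by positivity)] at hfinal
    have h4N : (4 * N : ℝ) ≤ n := by exact_mod_cast Nat.cast_le.2 hn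
    have hN1' : (1:ℝ) ≤ N := by exact_mod_cast hN1
    nlinarith
  -- conclude summability of 1/L
  have hbound : ∀ n, 4 * N ≤ n → (L n)⁻¹ ≤ 2 * G n := by
    intro n hn
    have h1 : L n + ((n:ℝ) + 1) * c ≤ 2 * L n := by linarith [hclaim n hn]
    calc (L n)⁻¹ ≤ ((L n + ((n:ℝ)+1)*c)/2)⁻¹ :=
          inv_anti₀ (by have := hden n; positivity) (by linarith)
      _ = 2 * G n := by rw [inv_div, div_eq_mul_inv]
  have hLsum : Summable (fun n => (L n)⁻¹) := by
    refine (summable_nat_add_iff (4*N)).1 ?_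
    refine Summable.of_nonneg_of_le (fun n => (inv_pos.2 (hpos _)).le)
      (fun n => hbound _ (Nat.le_add_left _ _)) ?_
    exact (((summable_nat_add_iff (4*N)).2 hG).mul_left 2)
  refine absurd h ?_
  rw [tsum_congr (fun n => by
    rw [one_div, ENNReal.ofReal_inv_of_pos (hpos n)] :
    ∀ n : ℕ, 1 / ENNReal.ofReal (L n) = ENNReal.ofReal ((L n)⁻¹)),
    ← ENNReal.ofReal_tsum_of_nonneg (fun n => (inv_pos.2 (hpos n)).le) hLsum]
  exact ENNReal.ofReal_ne_top

/-- For an irrational `α` with partial quotients `aₙ ≥ 1` and continued fraction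
denominators `qₙ`, the series `∑ 1/log qₙ` diverges iff `∑ 1/(∑_{i≤n} log aᵢ)` diverges.
The sums are taken in `ℝ≥0∞` so that terms with vanishing denominator are `+∞`, in
accordance with the stated convention. -/
theorem stmt11 (a q : ℕ → ℕ) (ha : ∀ i, 1 ≤ i → 1 ≤ a i)
    (hq0 : q 0 = 1) (hq1 : q 1 = a 1)
    (hqrec : ∀ n, q (n + 2) = a (n + 2) * q (n + 1) + q n) :
    (∑' n : ℕ, 1 / ENNReal.ofReal (Real.log (q (n + 1))) = ⊤) ↔
      (∑' n : ℕ, 1 / ENNReal.ofReal (∑ i ∈ Finset.Icc 1 (n + 1), Real.log (a i)) = ⊤) := by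
  set P : ℕ → ℕ := fun n => ∏ i ∈ Finset.Icc 1 n, a i with hPdef
  have hP1 : ∀ n, 1 ≤ P n := by
    intro n
    exact Finset.one_le_prod' fun i hi => ha i (Finset.mem_Icc.1 hi).1
  have hPsucc : ∀ n, P (n + 1) = P n * a (n + 1) := by
    intro n
    exact Finset.prod_Icc_succ_top (Nat.le_add_left 1 n) a
  have hbounds : ∀ n, (P n ≤ q n ∧ q n ≤ 2 ^ n * P n) ∧
      (P (n+1) ≤ q (n+1) ∧ q (n+1) ≤ 2 ^ (n+1) * P (n+1)) := by
    intro n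
    induction n with
    | zero =>
      constructor
      · constructor
        · simp [hPdef, hq0]
        · simp [hPdef, hq0]
      · constructor
        · simp [hPdef, hq1]
        · simp only [hPdef]
          rw [hq1]
          have : ∏ i ∈ Finset.Icc 1 1, a i = a 1 := by simp
          rw [this]; omega
    | succ n ih =>
      obtain ⟨⟨h1, h2⟩, h3, h4⟩ := ih
      refine ⟨⟨h3, h4⟩, ?_, ?_⟩
      · rw [hqrec n, hPsucc (n+1)]
        have := Nat.mul_le_mul_left (a (n+2)) h3
        calc P (n+1) * a (n+2) ≤ a (n+2) * q (n+1) := by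
              rw [mul_comm]; exact Nat.mul_le_mul_left _ h3
          _ ≤ a (n+2) * q (n+1) + q n := Nat.le_add_right _ _
      · rw [hqrec n, hPsucc (n+1)]
        have ha2 : 1 ≤ a (n+2) := ha _ (by omega)
        have hPn : P n ≤ P (n+1) := by
          rw [hPsucc n]; exact Nat.le_mul_of_pos_right _ (ha _ (by omega))
        calc a (n+2) * q (n+1) + q n
            ≤ a (n+2) * (2^(n+1) * P (n+1)) + 2^n * P n := by
              exact Nat.add_le_add (Nat.mul_le_mul_left _ h4) h2
          _ ≤ a (n+2) * (2^(n+1) * P (n+1)) + 2^(n+1) * (P (n+1) * a (n+2)) := by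
              apply Nat.add_le_add_left
              calc 2^n * P n ≤ 2^(n+1) * P (n+1) := by
                    exact Nat.mul_le_mul (Nat.pow_le_pow_right (by norm_num) (by omega)) hPn
                _ ≤ 2^(n+1) * (P (n+1) * a (n+2)) :=
                    Nat.mul_le_mul_left _ (Nat.le_mul_of_pos_right _ ha2)
          _ = 2^(n+1) * (P (n+1) * a (n+2)) + 2^(n+1) * (P (n+1) * a (n+2)) := by ring
          _ = 2^(n+2) * (P (n+1) * a (n+2)) := by ring
  set L : ℕ → ℝ := fun n => ∑ i ∈ Finset.Icc 1 (n+1), Real.log (a i) with hLdef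
  have hLlog : ∀ n, L n = Real.log (P (n+1)) := by
    intro n
    rw [hLdef]
    simp only [hPdef]
    push_cast
    rw [Real.log_prod]
    intro i hi
    have := ha i (Finset.mem_Icc.1 hi).1
    positivity
  have hq_pos : ∀ n, 1 ≤ q n := fun n => le_trans (hP1 n) (hbounds n).1.1
  have hLmono : Monotone L := by
    intro m n hmn
    rw [hLdef]
    exact Finset.sum_le_sum_of_subset_of_nonneg
      (Finset.Icc_subset_Icc_right (by omega))
      (fun i hi _ => Real.log_nonneg (by exact_mod_cast ha i (Finset.mem_Icc.1 hi).1))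
  have hL_le : ∀ n, L n ≤ Real.log (q (n+1)) := by
    intro n
    rw [hLlog n]
    apply Real.log_le_log (by exact_mod_cast hP1 (n+1))
    exact_mod_cast (hbounds n).2.1
  have hle_up : ∀ n, Real.log (q (n+1)) ≤ L n + ((n:ℝ) + 1) * Real.log 2 := by
    intro n
    rw [hLlog n]
    have h2 : Real.log (q (n+1)) ≤ Real.log (2^(n+1) * P (n+1)) := by
      apply Real.log_le_log (by exact_mod_cast hq_pos (n+1))
      exact_mod_cast (hbounds n).2.2
    calc Real.log (q (n+1)) ≤ Real.log ((2:ℝ)^(n+1) * P (n+1)) := by exact_mod_cast h2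
      _ = ((n:ℝ)+1) * Real.log 2 + Real.log (P (n+1)) := by
          rw [Real.log_mul (by positivity) (by have := hP1 (n+1); positivity),
            Real.log_pow]
          push_cast; ring
      _ = Real.log (P (n+1)) + ((n:ℝ)+1) * Real.log 2 := by ring
  constructor
  · intro h
    rw [eq_top_iff, ← h]
    apply ENNReal.tsum_le_tsum
    intro n
    simp only [one_div]
    exact ENNReal.inv_le_inv.2 (ENNReal.ofReal_le_ofReal (hL_le n))
  · intro h
    by_cases ha1 : a 1 = 1
    · have hq1' : q 1 = 1 := by rw [hq1, ha1]
      have : (1 : ENNReal) / ENNReal.ofReal (Real.log (q (0 + 1))) = ⊤ := by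
        simp [hq1']
      rw [eq_top_iff, ← this]
      exact ENNReal.le_tsum 0
    · have ha2 : 2 ≤ a 1 := by have := ha 1 le_rfl; omega
      have hLpos : ∀ n, 0 < L n := by
        intro n
        have h1 : Real.log 2 ≤ Real.log (a 1) :=
          Real.log_le_log (by norm_num) (by exact_mod_cast ha2)
        have h2 : Real.log (a 1) ≤ L n := by
          rw [hLdef]
          simp only
          refine Finset.single_le_sum (f := fun i => Real.log (a i))
            (fun i hi => Real.log_nonneg (by exact_mod_cast ha i (Finset.mem_Icc.1 hi).1)) ?_
          simp
        have := Real.log_pos (by norm_num : (1:ℝ) < 2)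
        linarith
      have hkey := key_lemma L hLmono (Real.log 2) (Real.log_pos (by norm_num)) hLpos h
      rw [eq_top_iff, ← hkey]
      apply ENNReal.tsum_le_tsum
      intro n
      simp only [one_div]
      exact ENNReal.inv_le_inv.2 (ENNReal.ofReal_le_ofReal (hle_up n))
end

section
/- Let α be irrational with q_{n+1} ≥ 100 q_n and α < p_n/q_n, and let φ(x) = −1 − log(1−x). Then for every a ∈ ℝ and for all sufficiently large such n, the Birkhoff sum φ^{(q_n)} is continuous and strictly increasing on each interval Ī_{n,l} = [l/q_n + 1/(50 q_n), (l+1)/q_n − 1/(50 q_n)], l = 0, …, q_n − 1, its derivative satisfies |(φ^{(q_n)})'(x) − q_n log q_n| < (1/√n) q_n log q_n on Ī_{n,l}, and moreover φ^{(q_n)}(l/q_n + 3/(4 q_n)) ≥ a + 1 and φ^{(q_n)}(l/q_n + 1/(4 q_n)) ≤ a − 1. -/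
/-!
Write `pₙ/qₙ = p/q` and `α = p/q - δ`; for the `n` in question `0 ≤ δ ≤ 1/(100 q²)`. If `x` lies
in the cell `[l/q, (l+1)/q)` and `s = qx - l`, then `q (1 - {x + jα}) = mⱼ + 1 - s + qjδ` with
`mⱼ ≡ -1 - l - jp (mod q)` and `0 ≤ qjδ < 1/100`, and since `p` is coprime to `q`, `j ↦ mⱼ`
permutes `{0, …, q-1}`. Hence on the trimmed cell `φ^{(q)}(x) = ∑ⱼ (-1 - log (cⱼ - x))`, where
`cⱼ` is the singularity of `φ(· + jα)` to the right of the cell, is smooth and increasing, and its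
derivative `q ∑ₘ 1/(m + 1 - s + ηₘ)`, `0 ≤ ηₘ < 1/100`, lies between `q log (q+1)` and
`q (51 + log q)` by the harmonic-sum bounds. Its values are squeezed between sums
`∑ₘ (-1 - log ((m + θ)/q))` with `θ ≈ 1 - s`, which Stirling's formula puts at
`(1/2 - θ) log q + O(1)`: large and positive at `s = 3/4`, large and negative at `s = 1/4`.
Finally `qₙ ≥ Fib (n+1)`, so `log qₙ ≥ (n-1)/3` beats both `51 √n` and any constant.
-/

open Finset Real Set
open scoped Nat

theorem sum_range_one_div_add_le {θ : ℝ} (hθ : 0 < θ) (n : ℕ) :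
    ∑ m ∈ range n, 1 / ((m : ℝ) + θ) ≤ 1 / θ + 1 + log n := by
  rcases n with _ | n
  · simp only [Finset.range_zero, sum_empty, CharP.cast_eq_zero, log_zero, add_zero]
    positivity
  have hshift : ∑ i ∈ range n, 1 / ((↑(i + 1) : ℝ) + θ) ≤ harmonic n := by
    simp only [harmonic, Rat.cast_sum, Rat.cast_inv, Rat.cast_natCast, one_div]
    gcongr
    simpa using hθ.le
  have hlog : log n ≤ log ↑(n + 1) := by
    rcases n.eq_zero_or_pos with rfl | hn
    · simp
    · exact log_le_log (by positivity) (by simp)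
  rw [sum_range_succ']
  simp only [CharP.cast_eq_zero, zero_add]
  linarith [harmonic_le_one_add_log n]

theorem log_factorial_eq_sum_log (n : ℕ) : log n ! = ∑ m ∈ range n, log ((m : ℝ) + 1) := by
  rw [← prod_range_add_one_eq_factorial, Nat.cast_prod, log_prod (fun m _ => by positivity)]
  push_cast
  rfl

theorem log_factorial_le_stirling {n : ℕ} (hn : n ≠ 0) :
    log n ! ≤ n * log n - n + log n / 2 + 1 := by
  obtain ⟨m, rfl⟩ := Nat.exists_eq_succ_of_ne_zero hn
  have hseq := Stirling.log_stirlingSeq'_antitone (Nat.zero_le m)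
  simp only [Function.comp, Stirling.stirlingSeq_one, Stirling.log_stirlingSeq_formula] at hseq
  rw [log_div (exp_pos 1).ne' (by positivity), log_exp, log_sqrt zero_le_two,
    log_mul two_ne_zero (by positivity), log_div (by positivity) (exp_pos 1).ne', log_exp] at hseq
  push_cast at hseq ⊢
  linarith

section LogShift

variable {θ : ℝ}

theorem sum_log_add_le (hθ₀ : 0 < θ) (hθ₁ : θ ≤ 1) (n : ℕ) :
    ∑ m ∈ range n, log ((m : ℝ) + θ) ≤ log n ! - (1 - θ) * log (n + 1) := by
  have hterm : ∀ m ∈ range n,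
      log ((m : ℝ) + θ) ≤ log ((m : ℝ) + 1) - (1 - θ) * (1 / ((m : ℝ) + 1)) := by
    intro m _
    have h := one_sub_inv_le_log_of_pos (x := ((m : ℝ) + 1) / (m + θ)) (by positivity)
    rw [log_div (by positivity) (by positivity), inv_div] at h
    have : 1 - ((m : ℝ) + θ) / (m + 1) = (1 - θ) * (1 / ((m : ℝ) + 1)) := by
      field_simp; ring
    linarith
  have hharm : log (n + 1) ≤ ∑ m ∈ range n, 1 / ((m : ℝ) + 1) := by
    simpa [harmonic] using log_add_one_le_harmonic n
  calc ∑ m ∈ range n, log ((m : ℝ) + θ)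
      ≤ ∑ m ∈ range n, (log ((m : ℝ) + 1) - (1 - θ) * (1 / ((m : ℝ) + 1))) :=
        sum_le_sum hterm
    _ = log n ! - (1 - θ) * ∑ m ∈ range n, 1 / ((m : ℝ) + 1) := by
      rw [sum_sub_distrib, ← mul_sum, log_factorial_eq_sum_log]
    _ ≤ log n ! - (1 - θ) * log (n + 1) := by gcongr

theorem log_factorial_sub_le_sum_log_add (hθ₀ : 0 < θ) (hθ₁ : θ ≤ 1) (n : ℕ) :
    log n ! - (1 - θ) / θ * (1 + log n) ≤ ∑ m ∈ range n, log ((m : ℝ) + θ) := by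
  have hterm : ∀ m ∈ range n,
      log ((m : ℝ) + 1) - (1 - θ) / θ * (1 / ((m : ℝ) + 1)) ≤ log ((m : ℝ) + θ) := by
    intro m _
    have h := log_le_sub_one_of_pos (x := ((m : ℝ) + 1) / (m + θ)) (by positivity)
    rw [log_div (by positivity) (by positivity)] at h
    have : ((m : ℝ) + 1) / (m + θ) - 1 ≤ (1 - θ) / θ * (1 / ((m : ℝ) + 1)) := by
      rw [div_sub_one (by positivity), div_mul_div_comm,
        div_le_div_iff₀ (by positivity) (by positivity)]
      nlinarith [mul_nonneg (mul_nonneg (sub_nonneg.2 hθ₁) (sub_nonneg.2 hθ₁)) m.cast_nonneg]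
    linarith
  have hharm : ∑ m ∈ range n, 1 / ((m : ℝ) + 1) ≤ 1 + log n := by
    simpa [harmonic] using harmonic_le_one_add_log n
  calc log n ! - (1 - θ) / θ * (1 + log n)
      ≤ log n ! - (1 - θ) / θ * ∑ m ∈ range n, 1 / ((m : ℝ) + 1) := by gcongr
    _ = ∑ m ∈ range n, (log ((m : ℝ) + 1) - (1 - θ) / θ * (1 / ((m : ℝ) + 1))) := by
      rw [sum_sub_distrib, ← mul_sum, log_factorial_eq_sum_log]
    _ ≤ _ := sum_le_sum hterm

theorem sum_neg_one_sub_log_add_div_eq (hθ₀ : 0 < θ) (n : ℕ) :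
    ∑ m ∈ range n, (-1 - log (((m : ℝ) + θ) / n)) =
      n * log n - n - ∑ m ∈ range n, log ((m : ℝ) + θ) := by
  rcases n.eq_zero_or_pos with rfl | hn
  · simp
  rw [sum_congr rfl fun m _ => by rw [log_div (by positivity) (by positivity)]]
  simp only [sub_sub_eq_add_sub, sum_sub_distrib, sum_add_distrib, sum_const, card_range,
    nsmul_eq_mul]
  ring

theorem le_sum_neg_one_sub_log_add_div (hθ₀ : 0 < θ) (hθ₁ : θ ≤ 1) {n : ℕ} (hn : n ≠ 0) :
    (1 / 2 - θ) * log n - 1 ≤ ∑ m ∈ range n, (-1 - log (((m : ℝ) + θ) / n)) := by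
  rw [sum_neg_one_sub_log_add_div_eq hθ₀]
  have hlog : (1 - θ) * log n ≤ (1 - θ) * log (n + 1) := by
    gcongr
    linarith
  linarith [sum_log_add_le hθ₀ hθ₁ n, log_factorial_le_stirling hn]

theorem sum_neg_one_sub_log_add_div_le (hθ₀ : 0 < θ) (hθ₁ : θ ≤ 1) {n : ℕ} (hn : n ≠ 0) :
    ∑ m ∈ range n, (-1 - log (((m : ℝ) + θ) / n)) ≤ (1 - θ) / θ * (1 + log n) - log n / 2 := by
  rw [sum_neg_one_sub_log_add_div_eq hθ₀]
  have h2π : 0 ≤ log (2 * π) := log_nonneg (by linarith [pi_gt_three])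
  linarith [log_factorial_sub_le_sum_log_add hθ₀ hθ₁ n, Stirling.le_log_factorial_stirling hn]

end LogShift

theorem sum_range_emod_add_mul {M : Type*} [AddCommMonoid M] {p : ℤ} {q : ℕ}
    (hpq : IsCoprime p q) (c : ℤ) (f : ℤ → M) :
    ∑ j ∈ range q, f ((c + j * p) % q) = ∑ m ∈ range q, f m := by
  rcases q.eq_zero_or_pos with rfl | hq
  · simp
  set i : ℕ → ℕ := fun j => ((c + j * p) % q).toNat
  have hi : ∀ j, (i j : ℤ) = (c + j * p) % q := fun j =>
    Int.toNat_of_nonneg (Int.emod_nonneg _ (by omega))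
  have hmaps : Set.MapsTo i (Finset.range q) (Finset.range q) := fun j _ => by
    have := Int.emod_lt_of_pos (c + j * p) (by omega : (0 : ℤ) < q)
    have := hi j
    simp only [coe_range, Set.mem_Iio]
    omega
  have hinj : Set.InjOn i (Finset.range q) := by
    intro j₁ hj₁ j₂ hj₂ h
    simp only [coe_range, Set.mem_Iio] at hj₁ hj₂
    have hmod : c + j₁ * p ≡ c + j₂ * p [ZMOD q] := by
      simp only [Int.ModEq, ← hi, h]
    have hdvd : (q : ℤ) ∣ (j₂ - j₁ : ℤ) * p := by
      simpa [sub_mul] using (Int.ModEq.add_left_cancel' c hmod).dvd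
    have := Int.eq_zero_of_abs_lt_dvd (hpq.symm.dvd_of_dvd_mul_right hdvd)
      (by rw [abs_lt]; omega)
    omega
  refine sum_nbij i hmaps hinj (surjOn_of_injOn_of_card_le i hmaps hinj le_rfl) fun j _ => ?_
  rw [hi]

theorem hasDerivAt_sum_neg_one_sub_log_sub {ι : Type*} (s : Finset ι) (c : ι → ℝ) {x : ℝ}
    (hx : ∀ i ∈ s, x < c i) :
    HasDerivAt (fun y => ∑ i ∈ s, (-1 - log (c i - y))) (∑ i ∈ s, 1 / (c i - x)) x := by
  refine HasDerivAt.fun_sum fun i hi => ?_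
  have := (((hasDerivAt_id x).const_sub (c i)).log (sub_pos.2 (hx i hi)).ne').const_sub (-1)
  simpa [neg_div] using this

noncomputable def logBirkhoffSum (α : ℝ) (q : ℕ) (x : ℝ) : ℝ :=
  ∑ j ∈ range q, (-1 - log (1 - Int.fract (x + j * α)))

/-- The interval `Ī_{n,l}` of the paper, for `q = qₙ`. -/
def trimmedCell (q : ℕ) (l : ℤ) : Set ℝ :=
  Icc ((l : ℝ) / q + 1 / (50 * q)) (((l : ℝ) + 1) / q - 1 / (50 * q))

def cellOffset (p : ℤ) (q : ℕ) (l : ℤ) (j : ℕ) : ℤ :=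
  (-1 - l - j * p) % q

/-- When `α = p/q - δ` with `0 ≤ δ` small and `x` lies in the cell `[l/q, (l+1)/q)`, the first
point `y > x` with `y + jα ∈ ℤ`, i.e. the singularity of `y ↦ φ(y + jα)` to the right of `x`. -/
noncomputable def cellSingularity (p : ℤ) (q : ℕ) (δ : ℝ) (l : ℤ) (j : ℕ) : ℝ :=
  (l + 1 + cellOffset p q l j) / q + j * δ

section CellSingularity

variable {α δ x : ℝ} {p l : ℤ} {q : ℕ} {j : ℕ}

theorem mem_trimmedCell_iff (hq : 0 < q) :
    x ∈ trimmedCell q l ↔ 1 / 50 ≤ q * x - l ∧ q * x - l ≤ 49 / 50 := by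
  have hq' : (0 : ℝ) < q := by exact_mod_cast hq
  have hlo : (l : ℝ) / q + 1 / (50 * q) = (l + 1 / 50) / q := by field_simp
  have hhi : ((l : ℝ) + 1) / q - 1 / (50 * q) = (l + 49 / 50) / q := by field_simp; ring
  simp only [trimmedCell, Set.mem_Icc, hlo, hhi, div_le_iff₀ hq', le_div_iff₀ hq']
  constructor <;> rintro ⟨h₀, h₁⟩ <;> constructor <;> linarith

theorem cellOffset_nonneg (hq : 0 < q) : (0 : ℝ) ≤ cellOffset p q l j := by
  exact_mod_cast Int.emod_nonneg _ (by omega)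

theorem cellOffset_add_one_le (hq : 0 < q) : (cellOffset p q l j : ℝ) + 1 ≤ q := by
  have := Int.emod_lt_of_pos (-1 - l - j * p) (by omega : (0 : ℤ) < q)
  exact_mod_cast (by unfold cellOffset; omega : cellOffset p q l j + 1 ≤ q)

theorem sum_cellOffset {M : Type*} [AddCommMonoid M] (hpq : IsCoprime p q) (f : ℤ → M) :
    ∑ j ∈ range q, f (cellOffset p q l j) = ∑ m ∈ range q, f m := by
  simpa only [cellOffset, mul_neg, ← sub_eq_add_neg] using
    sum_range_emod_add_mul hpq.neg_left (-1 - l) f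

theorem mul_cellSingularity_sub (hq : 0 < q) :
    q * (cellSingularity p q δ l j - x) = cellOffset p q l j + 1 - (q * x - l) + q * j * δ := by
  unfold cellSingularity
  field_simp
  ring

theorem one_sub_fract_add_mul_eq (hq : 0 < q) (hα : α = p / q - δ) (hδ₀ : 0 ≤ δ)
    (h₀ : q * j * δ ≤ q * x - l) (h₁ : q * x - l < 1) :
    1 - Int.fract (x + j * α) = cellSingularity p q δ l j - x := by
  have hq' : (0 : ℝ) < q := by exact_mod_cast hq
  have hgap := mul_cellSingularity_sub (p := p) (δ := δ) (l := l) (j := j) (x := x) hq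
  have hr₀ := cellOffset_nonneg (p := p) (l := l) (j := j) hq
  have hr₁ := cellOffset_add_one_le (p := p) (l := l) (j := j) hq
  have hjδ : 0 ≤ (q : ℝ) * j * δ := by positivity
  rw [sub_eq_iff_eq_add, add_comm, ← sub_eq_iff_eq_add, eq_comm, Int.fract_eq_iff]
  refine ⟨by nlinarith, by nlinarith, -1 - (-1 - l - j * p) / q, ?_⟩
  have hdiv := congrArg (Int.cast : ℤ → ℝ) (Int.emod_add_mul_ediv (-1 - l - j * p) q)
  push_cast at hdiv
  unfold cellSingularity cellOffset
  rw [hα]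
  field_simp
  push_cast
  linear_combination hdiv

theorem cellSingularity_sub_bounds (hq : 0 < q) (hδ₀ : 0 ≤ δ)
    (hδ : (q : ℝ) ^ 2 * δ ≤ 1 / 100) (hj : j < q) :
    cellOffset p q l j + 1 - (q * x - l) ≤ q * (cellSingularity p q δ l j - x) ∧
      q * (cellSingularity p q δ l j - x) ≤ cellOffset p q l j + 1 - (q * x - l) + 1 / 100 := by
  have hjq : (j : ℝ) ≤ q := by exact_mod_cast hj.le
  have : (q : ℝ) * j * δ ≤ q ^ 2 * δ := by rw [sq]; gcongr
  have : 0 ≤ (q : ℝ) * j * δ := by positivity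
  rw [mul_cellSingularity_sub hq]
  constructor <;> linarith

theorem logBirkhoffSum_eq_sum_log (hq : 0 < q) (hα : α = p / q - δ) (hδ₀ : 0 ≤ δ)
    (hδ : (q : ℝ) ^ 2 * δ ≤ 1 / 100) (h₀ : 1 / 100 ≤ q * x - l) (h₁ : q * x - l < 1) :
    logBirkhoffSum α q x = ∑ j ∈ range q, (-1 - log (cellSingularity p q δ l j - x)) := by
  refine sum_congr rfl fun j hj => ?_
  have hjq : (j : ℝ) ≤ q := by exact_mod_cast (mem_range.1 hj).le
  have : (q : ℝ) * j * δ ≤ q ^ 2 * δ := by rw [sq]; gcongr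
  rw [one_sub_fract_add_mul_eq hq hα hδ₀ (by linarith) h₁]

theorem hasDerivAt_logBirkhoffSum (hq : 0 < q) (hα : α = p / q - δ) (hδ₀ : 0 ≤ δ)
    (hδ : (q : ℝ) ^ 2 * δ ≤ 1 / 100) (h₀ : 1 / 100 < q * x - l) (h₁ : q * x - l < 1) :
    HasDerivAt (logBirkhoffSum α q)
      (∑ j ∈ range q, 1 / (cellSingularity p q δ l j - x)) x := by
  have hcont : Continuous fun y : ℝ => q * y - l := by fun_prop
  have hU : {y : ℝ | 1 / 100 < q * y - l ∧ q * y - l < 1} ∈ nhds x :=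
    ((isOpen_lt continuous_const hcont).inter (isOpen_lt hcont continuous_const)).mem_nhds
      ⟨h₀, h₁⟩
  have hpos : ∀ j ∈ range q, x < cellSingularity p q δ l j := fun j hj => by
    have := (cellSingularity_sub_bounds (l := l) (p := p) (x := x) hq hδ₀ hδ (mem_range.1 hj)).1
    have := cellOffset_nonneg (p := p) (l := l) (j := j) hq
    nlinarith
  refine (hasDerivAt_sum_neg_one_sub_log_sub _ _ hpos).congr_of_eventuallyEq ?_
  filter_upwards [hU] with y hy
  exact logBirkhoffSum_eq_sum_log hq hα hδ₀ hδ hy.1.le hy.2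

theorem sum_one_div_cellSingularity_sub_bounds (hq : 0 < q) (hpq : IsCoprime p q)
    (hδ₀ : 0 ≤ δ) (hδ : (q : ℝ) ^ 2 * δ ≤ 1 / 100) (h₀ : 1 / 100 ≤ q * x - l)
    (h₁ : q * x - l ≤ 49 / 50) :
    q * log (q + 1) ≤ ∑ j ∈ range q, 1 / (cellSingularity p q δ l j - x) ∧
      ∑ j ∈ range q, 1 / (cellSingularity p q δ l j - x) ≤ q * (51 + log q) := by
  have hq' : (0 : ℝ) < q := by exact_mod_cast hq
  have hreindex (θ : ℝ) : ∑ j ∈ range q, q / ((cellOffset p q l j : ℝ) + θ) =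
      q * ∑ m ∈ range q, 1 / ((m : ℝ) + θ) := by
    rw [sum_cellOffset hpq fun r : ℤ => (q : ℝ) / (r + θ), mul_sum]
    simp only [Int.cast_natCast, mul_one_div]
  have hterm : ∀ j ∈ range q,
      q / ((cellOffset p q l j : ℝ) + 1) ≤ 1 / (cellSingularity p q δ l j - x) ∧
        1 / (cellSingularity p q δ l j - x) ≤ q / ((cellOffset p q l j : ℝ) + 1 / 50) := by
    intro j hj
    obtain ⟨hlo, hhi⟩ :=
      cellSingularity_sub_bounds (l := l) (p := p) (x := x) hq hδ₀ hδ (mem_range.1 hj)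
    have := cellOffset_nonneg (p := p) (l := l) (j := j) hq
    rw [← mul_div_mul_left 1 _ hq'.ne', mul_one]
    constructor <;> apply div_le_div_of_nonneg_left hq'.le <;> linarith
  constructor
  · calc (q : ℝ) * log (q + 1) ≤ q * ∑ m ∈ range q, 1 / ((m : ℝ) + 1) := by
          gcongr
          simpa [harmonic] using log_add_one_le_harmonic q
      _ ≤ _ := (hreindex 1).symm.le.trans (sum_le_sum fun j hj => (hterm j hj).1)
  · calc ∑ j ∈ range q, 1 / (cellSingularity p q δ l j - x)
        ≤ q * ∑ m ∈ range q, 1 / ((m : ℝ) + 1 / 50) :=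
          (sum_le_sum fun j hj => (hterm j hj).2).trans (hreindex (1 / 50)).le
      _ ≤ q * (51 + log q) := by
          gcongr
          linarith [sum_range_one_div_add_le (by norm_num : (0 : ℝ) < 1 / 50) q]

theorem logBirkhoffSum_bounds (hq : 0 < q) (hpq : IsCoprime p q) (hα : α = p / q - δ)
    (hδ₀ : 0 ≤ δ) (hδ : (q : ℝ) ^ 2 * δ ≤ 1 / 100) (h₀ : 1 / 100 ≤ q * x - l)
    (h₁ : q * x - l < 1) :
    ∑ m ∈ range q, (-1 - log (((m : ℝ) + (1 - (q * x - l) + 1 / 100)) / q)) ≤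
        logBirkhoffSum α q x ∧
      logBirkhoffSum α q x ≤
        ∑ m ∈ range q, (-1 - log (((m : ℝ) + (1 - (q * x - l))) / q)) := by
  have hq' : (0 : ℝ) < q := by exact_mod_cast hq
  have hreindex (θ : ℝ) : ∑ j ∈ range q, (-1 - log (((cellOffset p q l j : ℝ) + θ) / q)) =
      ∑ m ∈ range q, (-1 - log (((m : ℝ) + θ) / q)) := by
    simpa only [Int.cast_natCast] using sum_cellOffset hpq fun r : ℤ => -1 - log ((r + θ) / q)
  rw [logBirkhoffSum_eq_sum_log hq hα hδ₀ hδ h₀ h₁, ← hreindex, ← hreindex]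
  constructor <;> refine sum_le_sum fun j hj => ?_
  all_goals
    obtain ⟨hlo, hhi⟩ :=
      cellSingularity_sub_bounds (l := l) (p := p) (x := x) hq hδ₀ hδ (mem_range.1 hj)
    have := cellOffset_nonneg (p := p) (l := l) (j := j) hq
    gcongr
  · nlinarith
  · rw [le_div_iff₀ hq']; linarith
  · rw [div_le_iff₀ hq']; linarith

theorem exists_hasDerivAt_logBirkhoffSum_abs_sub_lt (hq : 0 < q) (hpq : IsCoprime p q)
    (hα : α = p / q - δ) (hδ₀ : 0 ≤ δ) (hδ : (q : ℝ) ^ 2 * δ ≤ 1 / 100) {ε : ℝ}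
    (hε : 51 < ε * log q) (hx : x ∈ trimmedCell q l) :
    ∃ d, HasDerivAt (logBirkhoffSum α q) d x ∧ |d - q * log q| < ε * q * log q := by
  obtain ⟨h₀, h₁⟩ := (mem_trimmedCell_iff hq).1 hx
  refine ⟨_, hasDerivAt_logBirkhoffSum (l := l) hq hα hδ₀ hδ (by linarith) (by linarith),
    ?_⟩
  obtain ⟨hlo, hhi⟩ :=
    sum_one_div_cellSingularity_sub_bounds (l := l) (x := x) hq hpq hδ₀ hδ (by linarith) h₁
  have hq' : (0 : ℝ) < q := by exact_mod_cast hq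
  have hlog : log q ≤ log (q + 1) := log_le_log hq' (by linarith)
  rw [abs_sub_lt_iff]
  constructor <;> nlinarith

theorem continuousOn_logBirkhoffSum_trimmedCell (hq : 0 < q) (hα : α = p / q - δ)
    (hδ₀ : 0 ≤ δ) (hδ : (q : ℝ) ^ 2 * δ ≤ 1 / 100) :
    ContinuousOn (logBirkhoffSum α q) (trimmedCell q l) :=
  fun x hx =>
    have ⟨h₀, h₁⟩ := (mem_trimmedCell_iff hq).1 hx
    (hasDerivAt_logBirkhoffSum (l := l) hq hα hδ₀ hδ (by linarith) (by linarith)).continuousAt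
      |>.continuousWithinAt

theorem strictMonoOn_logBirkhoffSum_trimmedCell (hq : 0 < q) (hpq : IsCoprime p q)
    (hα : α = p / q - δ) (hδ₀ : 0 ≤ δ) (hδ : (q : ℝ) ^ 2 * δ ≤ 1 / 100) :
    StrictMonoOn (logBirkhoffSum α q) (trimmedCell q l) := by
  refine strictMonoOn_of_hasDerivWithinAt_pos (convex_Icc _ _)
    (f' := fun x => ∑ j ∈ range q, 1 / (cellSingularity p q δ l j - x))
    (continuousOn_logBirkhoffSum_trimmedCell hq hα hδ₀ hδ) (fun x hx => ?_) (fun x hx => ?_)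
  all_goals obtain ⟨h₀, h₁⟩ := (mem_trimmedCell_iff hq).1 (interior_subset hx)
  · exact (hasDerivAt_logBirkhoffSum hq hα hδ₀ hδ (by linarith)
      (by linarith)).hasDerivWithinAt
  · have hq' : (1 : ℝ) ≤ q := by exact_mod_cast hq
    have := (sum_one_div_cellSingularity_sub_bounds hq hpq hδ₀ hδ (by linarith) h₁).1
    have := log_pos (by linarith : (1 : ℝ) < q + 1)
    nlinarith

theorem le_logBirkhoffSum_three_quarters (hq : 0 < q) (hpq : IsCoprime p q) (hα : α = p / q - δ)
    (hδ₀ : 0 ≤ δ) (hδ : (q : ℝ) ^ 2 * δ ≤ 1 / 100) {a : ℝ}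
    (ha : 6 * (|a| + 2) ≤ log q) :
    a + 1 ≤ logBirkhoffSum α q (l / q + 3 / (4 * q)) := by
  have hs : (q : ℝ) * (l / q + 3 / (4 * q)) - l = 3 / 4 := by field_simp; ring
  have h := (logBirkhoffSum_bounds hq hpq hα hδ₀ hδ (by rw [hs]; norm_num)
    (by rw [hs]; norm_num)).1
  rw [hs] at h
  have := le_sum_neg_one_sub_log_add_div (θ := 1 - 3 / 4 + 1 / 100) (by norm_num) (by norm_num)
    hq.ne'
  linarith [le_abs_self a, abs_nonneg a]

theorem logBirkhoffSum_one_quarter_le (hq : 0 < q) (hpq : IsCoprime p q) (hα : α = p / q - δ)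
    (hδ₀ : 0 ≤ δ) (hδ : (q : ℝ) ^ 2 * δ ≤ 1 / 100) {a : ℝ}
    (ha : 6 * (|a| + 2) ≤ log q) :
    logBirkhoffSum α q (l / q + 1 / (4 * q)) ≤ a - 1 := by
  have hs : (q : ℝ) * (l / q + 1 / (4 * q)) - l = 1 / 4 := by field_simp; ring
  have h := (logBirkhoffSum_bounds hq hpq hα hδ₀ hδ (by rw [hs]; norm_num)
    (by rw [hs]; norm_num)).2
  rw [hs] at h
  have := sum_neg_one_sub_log_add_div_le (θ := 1 - 1 / 4) (by norm_num) (by norm_num) hq.ne'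
  linarith [neg_abs_le a]

end CellSingularity

theorem three_halves_pow_le_fib (n : ℕ) : (3 / 2 : ℝ) ^ n ≤ Nat.fib (n + 2) := by
  induction n using Nat.twoStepInduction with
  | zero => norm_num
  | one => norm_num [Nat.fib_add_two]
  | more n ih₀ ih₁ =>
    rw [Nat.add_right_comm, pow_succ] at ih₁
    rw [Nat.fib_add_two, Nat.cast_add, pow_succ, pow_succ]
    nlinarith [pow_pos (by norm_num : (0 : ℝ) < 3 / 2) n]

namespace Irrational

variable {v : ℝ}

theorem not_terminatedAt (hv : Irrational v) (n : ℕ) : ¬(GenContFract.of v).TerminatedAt n :=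
  fun h => by
    obtain ⟨r, hr⟩ := (GenContFract.terminates_iff_rat v).1 ⟨n, h⟩
    exact hv.ne_rat r hr

theorem exists_int_eq_nums (hv : Irrational v) (n : ℕ) :
    ∃ P : ℤ, (GenContFract.of v).nums n = P := by
  have hpair (m : ℕ) :
      ∃ gp, (GenContFract.of v).s.get? m = some gp ∧ gp.a = 1 ∧ ∃ z : ℤ, gp.b = z := by
    obtain ⟨gp, hgp⟩ := Option.ne_none_iff_exists'.mp (hv.not_terminatedAt m)
    exact ⟨gp, hgp, GenContFract.of_partNum_eq_one_and_exists_int_partDen_eq hgp⟩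
  induction n using Nat.twoStepInduction with
  | zero => exact ⟨⌊v⌋, by rw [GenContFract.zeroth_num_eq_h, GenContFract.of_h_eq_floor]⟩
  | one =>
    obtain ⟨gp, hgp, ha, z, hb⟩ := hpair 0
    refine ⟨z * ⌊v⌋ + 1, ?_⟩
    rw [GenContFract.first_num_eq hgp, GenContFract.of_h_eq_floor, ha, hb]
    push_cast
    ring
  | more m ih₀ ih₁ =>
    obtain ⟨P₀, h₀⟩ := ih₀
    obtain ⟨P₁, h₁⟩ := ih₁
    obtain ⟨gp, hgp, ha, z, hb⟩ := hpair (m + 1)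
    refine ⟨z * P₁ + P₀, ?_⟩
    rw [GenContFract.nums_recurrence hgp h₀ h₁, ha, hb]
    push_cast
    ring

theorem exists_isCoprime_nums (hv : Irrational v) (n : ℕ) {Q Q' : ℕ}
    (hQ : (Q : ℝ) = (GenContFract.of v).dens n)
    (hQ' : (Q' : ℝ) = (GenContFract.of v).dens (n + 1)) :
    ∃ P : ℤ, (GenContFract.of v).nums n = P ∧ IsCoprime P Q := by
  obtain ⟨P, hP⟩ := hv.exists_int_eq_nums n
  obtain ⟨P', hP'⟩ := hv.exists_int_eq_nums (n + 1)
  have hdet := SimpContFract.determinant (s := SimpContFract.of v) (hv.not_terminatedAt n)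
  rw [SimpContFract.of, hP, hP', ← hQ, ← hQ'] at hdet
  have hdetZ : P * Q' - Q * P' = (-1) ^ (n + 1) := by exact_mod_cast hdet
  refine ⟨P, hP, (-1) ^ (n + 1) * Q', -((-1) ^ (n + 1) * P'), ?_⟩
  have hsq : ((-1 : ℤ) ^ (n + 1)) * (-1) ^ (n + 1) = 1 := by rw [← mul_pow]; simp
  linear_combination (-1) ^ (n + 1) * hdetZ + hsq

theorem sq_mul_abs_sub_le (hv : Irrational v) (n : ℕ) {Q Q' : ℕ} (hQ₀ : 0 < Q)
    (hQ : (Q : ℝ) = (GenContFract.of v).dens n)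
    (hQ' : (Q' : ℝ) = (GenContFract.of v).dens (n + 1))
    {P : ℤ} (hP : (GenContFract.of v).nums n = P) {C : ℝ} (hC : 0 < C) (hQQ' : C * Q ≤ Q') :
    (Q : ℝ) ^ 2 * |v - P / Q| ≤ 1 / C := by
  have hQ₀' : (0 : ℝ) < Q := by exact_mod_cast hQ₀
  have hQ'₀ : (0 : ℝ) < Q' := by nlinarith
  have happrox := GenContFract.abs_sub_convs_le (hv.not_terminatedAt n)
  rw [GenContFract.conv_eq_num_div_den, hP, ← hQ, ← hQ'] at happrox
  calc (Q : ℝ) ^ 2 * |v - P / Q| ≤ (Q : ℝ) ^ 2 * (1 / (Q * Q')) := by gcongr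
    _ = (Q : ℝ) / Q' := by field_simp
    _ ≤ 1 / C := by rw [div_le_div_iff₀ hQ'₀ hC]; linarith

theorem sub_one_div_three_le_log_dens (hv : Irrational v) {n : ℕ} (hn : 1 ≤ n) :
    ((n : ℝ) - 1) / 3 ≤ log ((GenContFract.of v).dens n) := by
  obtain ⟨m, rfl⟩ := Nat.exists_eq_add_of_le' hn
  have hfib : (3 / 2 : ℝ) ^ m ≤ (GenContFract.of v).dens (m + 1) :=
    (three_halves_pow_le_fib m).trans
      (GenContFract.succ_nth_fib_le_of_nth_den (Or.inr (hv.not_terminatedAt m)))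
  have hlog := log_le_log (by positivity) hfib
  rw [log_pow] at hlog
  have : (1 / 3 : ℝ) ≤ log (3 / 2) := by
    have := one_sub_inv_le_log_of_pos (by norm_num : (0 : ℝ) < 3 / 2)
    norm_num at this ⊢
    linarith
  push_cast
  nlinarith [(m.cast_nonneg : (0 : ℝ) ≤ m)]

end Irrational

theorem eventually_mul_sqrt_lt_and_le (c : ℝ) :
    ∀ᶠ n : ℕ in Filter.atTop, 51 * √n < ((n : ℝ) - 1) / 3 ∧ c ≤ ((n : ℝ) - 1) / 3 := by
  filter_upwards [Filter.eventually_ge_atTop 25600, Filter.eventually_ge_atTop ⌈3 * c + 1⌉₊]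
    with n hn hc
  have hn' : (25600 : ℝ) ≤ n := by exact_mod_cast hn
  have hsqrt : √n ≤ n / 160 := by
    rw [sqrt_le_left (by positivity)]
    nlinarith
  have := (Nat.ceil_le.1 hc)
  constructor <;> linarith

theorem stmt15_general (α : ℝ) (hirr : Irrational α)
    (qd : ℕ → ℕ) (hqd : ∀ n, (qd n : ℝ) = (GenContFract.of α).dens n) (a : ℝ) :
    ∃ N : ℕ, ∀ n ≥ N,
      ((qd (n + 1) : ℝ) ≥ 100 * qd n ∧
          α < (GenContFract.of α).nums n / (GenContFract.of α).dens n) →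
      ∀ l : ℕ, l < qd n →
        StrictMonoOn
            (fun x : ℝ => ∑ j ∈ Finset.range (qd n),
              (-1 - Real.log (1 - Int.fract (x + j * α))))
            (Icc ((l : ℝ) / qd n + 1 / (50 * qd n)) (((l : ℝ) + 1) / qd n - 1 / (50 * qd n))) ∧
        ContinuousOn
            (fun x : ℝ => ∑ j ∈ Finset.range (qd n),
              (-1 - Real.log (1 - Int.fract (x + j * α))))
            (Icc ((l : ℝ) / qd n + 1 / (50 * qd n)) (((l : ℝ) + 1) / qd n - 1 / (50 * qd n))) ∧
        (∀ x ∈ Icc ((l : ℝ) / qd n + 1 / (50 * qd n))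
              (((l : ℝ) + 1) / qd n - 1 / (50 * qd n)),
            ∃ d : ℝ,
              HasDerivAt
                (fun x : ℝ => ∑ j ∈ Finset.range (qd n),
                  (-1 - Real.log (1 - Int.fract (x + j * α)))) d x ∧
              |d - qd n * Real.log (qd n)| < (1 / Real.sqrt n) * qd n * Real.log (qd n)) ∧
        (∑ j ∈ Finset.range (qd n),
            (-1 - Real.log (1 - Int.fract ((l : ℝ) / qd n + 3 / (4 * qd n) + j * α)))) ≥
          a + 1 ∧
        (∑ j ∈ Finset.range (qd n),
            (-1 - Real.log (1 - Int.fract ((l : ℝ) / qd n + 1 / (4 * qd n) + j * α)))) ≤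
          a - 1 := by
  obtain ⟨N, hN⟩ := Filter.eventually_atTop.1 (eventually_mul_sqrt_lt_and_le (6 * (|a| + 2)))
  refine ⟨max N 1, fun n hn ⟨hq100, hαlt⟩ l _ => ?_⟩
  obtain ⟨h51, ha⟩ := hN n (le_of_max_le_left hn)
  have hn₀ : (0 : ℝ) < n := by exact_mod_cast le_of_max_le_right hn
  have hlog : ((n : ℝ) - 1) / 3 ≤ log (qd n) :=
    hqd n ▸ hirr.sub_one_div_three_le_log_dens (le_of_max_le_right hn)
  have hq : 0 < qd n := Nat.pos_of_ne_zero fun h => by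
    simp only [h, CharP.cast_eq_zero, log_zero] at hlog; linarith [abs_nonneg a]
  obtain ⟨P, hP, hpq⟩ := hirr.exists_isCoprime_nums n (hqd n) (hqd (n + 1))
  have hδ₀ : 0 ≤ P / qd n - α := by rw [hP, ← hqd] at hαlt; linarith
  have hδ : (qd n : ℝ) ^ 2 * (P / qd n - α) ≤ 1 / 100 := by
    refine le_trans ?_ (hirr.sq_mul_abs_sub_le n hq (hqd n) (hqd (n + 1)) hP (by norm_num) hq100)
    rw [abs_sub_comm]
    gcongr
    exact le_abs_self _
  have hα : α = P / qd n - (P / qd n - α) := (sub_sub_cancel _ _).symm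
  have hε : 51 < 1 / √n * log (qd n) := by
    rw [one_div_mul_eq_div, lt_div_iff₀ (sqrt_pos.2 hn₀)]
    linarith
  rw [← Int.cast_natCast (R := ℝ) l]
  exact ⟨strictMonoOn_logBirkhoffSum_trimmedCell hq hpq hα hδ₀ hδ,
    continuousOn_logBirkhoffSum_trimmedCell hq hα hδ₀ hδ,
    fun x hx => exists_hasDerivAt_logBirkhoffSum_abs_sub_lt hq hpq hα hδ₀ hδ hε hx,
    le_logBirkhoffSum_three_quarters hq hpq hα hδ₀ hδ (by linarith),
    logBirkhoffSum_one_quarter_le hq hpq hα hδ₀ hδ (by linarith)⟩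

/-- Lemma 1 of the paper: let `α` be irrational with convergents `pₙ/qₙ` and let
`φ(x) = −1 − log(1−x)` on `[0,1)` (extended `1`-periodically). For every `a ∈ ℝ` and all
sufficiently large `n` with `n ∈ H(α)` (i.e. `q_{n+1} ≥ 100 qₙ` and `α < pₙ/qₙ`), the
Birkhoff sum `φ^{(qₙ)}` is continuous and strictly increasing on each interval
`Ī_{n,l} = [l/qₙ + 1/(50qₙ), (l+1)/qₙ − 1/(50qₙ)]`, its derivative satisfies
`|(φ^{(qₙ)})'(x) − qₙ log qₙ| < (1/√n) qₙ log qₙ` there, and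
`φ^{(qₙ)}(l/qₙ + 3/(4qₙ)) ≥ a + 1`, `φ^{(qₙ)}(l/qₙ + 1/(4qₙ)) ≤ a − 1`. -/
theorem stmt15 (α : ℝ) (hα : α ∈ Set.Ioo (0 : ℝ) 1) (hirr : Irrational α)
    (qd : ℕ → ℕ) (hqd : ∀ n, (qd n : ℝ) = (GenContFract.of α).dens n) (a : ℝ) :
    ∃ N : ℕ, ∀ n ≥ N,
      ((qd (n + 1) : ℝ) ≥ 100 * qd n ∧
          α < (GenContFract.of α).nums n / (GenContFract.of α).dens n) →
      ∀ l : ℕ, l < qd n →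
        StrictMonoOn
            (fun x : ℝ => ∑ j ∈ Finset.range (qd n),
              (-1 - Real.log (1 - Int.fract (x + j * α))))
            (Icc ((l : ℝ) / qd n + 1 / (50 * qd n)) (((l : ℝ) + 1) / qd n - 1 / (50 * qd n))) ∧
        ContinuousOn
            (fun x : ℝ => ∑ j ∈ Finset.range (qd n),
              (-1 - Real.log (1 - Int.fract (x + j * α))))
            (Icc ((l : ℝ) / qd n + 1 / (50 * qd n)) (((l : ℝ) + 1) / qd n - 1 / (50 * qd n))) ∧
        (∀ x ∈ Icc ((l : ℝ) / qd n + 1 / (50 * qd n))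
              (((l : ℝ) + 1) / qd n - 1 / (50 * qd n)),
            ∃ d : ℝ,
              HasDerivAt
                (fun x : ℝ => ∑ j ∈ Finset.range (qd n),
                  (-1 - Real.log (1 - Int.fract (x + j * α)))) d x ∧
              |d - qd n * Real.log (qd n)| < (1 / Real.sqrt n) * qd n * Real.log (qd n)) ∧
        (∑ j ∈ Finset.range (qd n),
            (-1 - Real.log (1 - Int.fract ((l : ℝ) / qd n + 3 / (4 * qd n) + j * α)))) ≥
          a + 1 ∧
        (∑ j ∈ Finset.range (qd n),
            (-1 - Real.log (1 - Int.fract ((l : ℝ) / qd n + 1 / (4 * qd n) + j * α)))) ≤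
          a - 1 :=
  stmt15_general α hirr qd hqd a
end
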